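/- arXiv:2405.09670 — 2 statements merged into one kernel-verified Lean document; each statement's English description precedes it below -/
import Mathlib

section
/- Let M be a nonzero closed subspace of H with T_{α,β} M ⊆ M. Then there exists a nonzero closed subspace N ⊆ M such that every x ∈ N has vanishing zeroth coordinate (⟨x, e_0⟩ = 0) and T_{α,β} N ⊆ N. (In the Hardy-space picture this says M contains z²θH²(𝔻) for some inner function θ.) -/
/-!
Take `N = M ⊓ e₀ᗮ`. It is closed, and `T`-invariant because the zeroth coordinate of `T x` is
`c x₀` with `c = α β̄`. If `N = ⊥`, then `x ↦ x₀` is injective on `M`, so for `x ∈ M` the vector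
`T x - c x ∈ N` vanishes: `x` is an eigenvector of `T` for `c`. In coordinates this says
`xₙ = c xₙ₊₁` for `n ≥ 1` and `β x₀ = c x₁`; as `‖c‖ ≤ 1/2` and `x` is bounded, `xₙ = cᵐ xₙ₊ₘ → 0`,
so `x = 0`.
-/

open scoped ComplexConjugate

noncomputable section

/-- The Hilbert space `H = ℓ²(ℕ, ℂ)`. -/
abbrev H : Type := lp (fun _ : ℕ => ℂ) 2

/-- The standard orthonormal basis vectors of `ℓ²(ℕ, ℂ)`. -/
noncomputable def e (n : ℕ) : H := lp.single 2 n (1 : ℂ)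

open Filter Topology

theorem eq_zero_of_eq_mul_succ_of_bounded {𝕜 : Type*} [NormedDivisionRing 𝕜] {c : 𝕜}
    (hc : ‖c‖ < 1) {u : ℕ → 𝕜} {C : ℝ} (hC : ∀ n, ‖u n‖ ≤ C) (hu : ∀ n, u n = c * u (n + 1))
    (n : ℕ) : u n = 0 := by
  have hpow : ∀ m, u n = c ^ m * u (n + m) := by
    intro m
    induction m with
    | zero => simp
    | succ m ih => rw [ih, hu (n + m), pow_succ, mul_assoc, add_assoc]
  have hle : ∀ m, ‖u n‖ ≤ ‖c‖ ^ m * C := fun m => by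
    rw [hpow m, norm_mul, norm_pow]
    exact mul_le_mul_of_nonneg_left (hC _) (by positivity)
  have hlim : Tendsto (fun m => ‖c‖ ^ m * C) atTop (𝓝 0) := by
    simpa using (tendsto_pow_atTop_nhds_zero_of_lt_one (norm_nonneg c) hc).mul_const C
  exact norm_le_zero_iff.mp (ge_of_tendsto' hlim hle)

theorem norm_mul_conj_lt_one {α β : ℂ} (h : ‖α‖ ^ 2 + ‖β‖ ^ 2 = 1) : ‖α * conj β‖ < 1 := by
  rw [norm_mul, Complex.norm_conj]
  nlinarith [sq_nonneg (‖α‖ - ‖β‖)]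

@[simp]
theorem e_apply (n m : ℕ) : e n m = if m = n then 1 else 0 := by
  simp [e, lp.single_apply, Pi.single_apply]

theorem mem_orthogonal_e_iff {x : H} {n : ℕ} : x ∈ (ℂ ∙ e n)ᗮ ↔ x n = 0 := by
  simp [Submodule.mem_orthogonal_singleton_iff_inner_right, e, lp.inner_single_left]

theorem ContinuousLinearMap.apply_eq_of_forall_apply_e {f g : H →L[ℂ] ℂ}
    (h : ∀ i, f (e i) = g (e i)) (x : H) : f x = g x := by
  suffices f = g by rw [this]
  refine lp.ext_continuousLinearMap ENNReal.ofNat_ne_top fun i => ?_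
  ext
  simpa [e] using h i

section WeightedShift

variable {c β : ℂ} {T : H →L[ℂ] H} (hT0 : T (e 0) = c • e 0 + β • e 1)
  (hTn : ∀ n : ℕ, 1 ≤ n → T (e n) = e (n + 1))
include hT0

theorem apply_e_zero_apply (m : ℕ) : T (e 0) m = c * e 0 m + β * e 1 m := by
  rw [hT0, lp.coeFn_add, Pi.add_apply, lp.coeFn_smul, lp.coeFn_smul, Pi.smul_apply,
    Pi.smul_apply, smul_eq_mul, smul_eq_mul]

include hTn

theorem apply_zero_eq (x : H) : T x 0 = c * x 0 := by
  refine ((lp.evalCLM ℂ _ 2 0).comp T).apply_eq_of_forall_apply_e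
    (g := c • lp.evalCLM ℂ _ 2 0) (fun i => ?_) x
  rcases i with _ | i
  · show T (e 0) 0 = c * e 0 0
    simp [apply_e_zero_apply hT0]
  · simp [hTn, lp.evalCLM]

theorem apply_one_eq (x : H) : T x 1 = β * x 0 := by
  refine ((lp.evalCLM ℂ _ 2 1).comp T).apply_eq_of_forall_apply_e
    (g := β • lp.evalCLM ℂ _ 2 0) (fun i => ?_) x
  rcases i with _ | i
  · show T (e 0) 1 = β * e 0 0
    simp [apply_e_zero_apply hT0]
  · simp [hTn, lp.evalCLM]

theorem apply_add_two_eq (x : H) (n : ℕ) : T x (n + 2) = x (n + 1) := by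
  refine ((lp.evalCLM ℂ _ 2 (n + 2)).comp T).apply_eq_of_forall_apply_e
    (g := lp.evalCLM ℂ _ 2 (n + 1)) (fun i => ?_) x
  rcases i with _ | i
  · show T (e 0) (n + 2) = e 0 (n + 1)
    simp [apply_e_zero_apply hT0]
  · simp [hTn, lp.evalCLM]

theorem eq_zero_of_apply_eq_smul (hβ : β ≠ 0) (hc : ‖c‖ < 1) {x : H} (hx : T x = c • x) :
    x = 0 := by
  have hcoord : ∀ n, T x n = c * x n := fun n => by rw [hx]; rfl
  have htail : ∀ n, x (n + 1) = 0 :=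
    eq_zero_of_eq_mul_succ_of_bounded hc (fun n => lp.norm_apply_le_norm two_ne_zero x (n + 1))
      fun n => by rw [← hcoord, apply_add_two_eq hT0 hTn]
  have hhead : β * x 0 = 0 := by rw [← apply_one_eq hT0 hTn, hcoord, htail, mul_zero]
  ext n
  rcases n with _ | n
  · simpa [hβ] using hhead
  · simpa using htail n

variable {M : Submodule ℂ H} (hMinv : ∀ x ∈ M, T x ∈ M)
include hMinv

theorem inf_orthogonal_e_zero_ne_bot (hβ : β ≠ 0) (hc : ‖c‖ < 1) (hM : M ≠ ⊥) :
    M ⊓ (ℂ ∙ e 0)ᗮ ≠ ⊥ := by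
  intro hbot
  obtain ⟨x, hxM, hx⟩ := M.exists_mem_ne_zero_of_ne_bot hM
  have hmem : T x - c • x ∈ M ⊓ (ℂ ∙ e 0)ᗮ := by
    refine ⟨M.sub_mem (hMinv x hxM) (M.smul_mem c hxM), mem_orthogonal_e_iff.mpr ?_⟩
    rw [lp.coeFn_sub, Pi.sub_apply, apply_zero_eq hT0 hTn, lp.coeFn_smul, Pi.smul_apply,
      smul_eq_mul, sub_self]
  rw [hbot, Submodule.mem_bot, sub_eq_zero] at hmem
  exact hx (eq_zero_of_apply_eq_smul hT0 hTn hβ hc hmem)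

theorem apply_mem_inf_orthogonal_e_zero {x : H} (hx : x ∈ M ⊓ (ℂ ∙ e 0)ᗮ) :
    T x ∈ M ⊓ (ℂ ∙ e 0)ᗮ := by
  refine ⟨hMinv x hx.1, mem_orthogonal_e_iff.mpr ?_⟩
  rw [apply_zero_eq hT0 hTn, mem_orthogonal_e_iff.mp hx.2, mul_zero]

end WeightedShift

theorem invariant_subspace_contains_shift_invariant_general (α β : ℂ) (hβ : β ≠ 0)
    (hnorm : ‖α‖ ^ 2 + ‖β‖ ^ 2 = 1)
    (T : H →L[ℂ] H)
    (hT0 : T (e 0) = (α * conj β) • e 0 + β • e 1)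
    (hTn : ∀ n : ℕ, 1 ≤ n → T (e n) = e (n + 1))
    (M : Submodule ℂ H) (hMcl : IsClosed (M : Set H)) (hMne : M ≠ ⊥)
    (hMinv : ∀ x ∈ M, T x ∈ M) :
    ∃ N : Submodule ℂ H, IsClosed (N : Set H) ∧ N ≠ ⊥ ∧ N ≤ M ∧
      (∀ x ∈ N, (inner ℂ x (e 0) : ℂ) = 0) ∧ (∀ x ∈ N, T x ∈ N) := by
  refine ⟨M ⊓ (ℂ ∙ e 0)ᗮ, hMcl.inter (Submodule.isClosed_orthogonal _),
    inf_orthogonal_e_zero_ne_bot hT0 hTn hMinv hβ (norm_mul_conj_lt_one hnorm) hMne, inf_le_left,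
    fun x hx => Submodule.mem_orthogonal_singleton_iff_inner_left.mp hx.2,
    fun x hx => apply_mem_inf_orthogonal_e_zero hT0 hTn hMinv hx⟩

/-- Every nonzero closed `T_{α,β}`-invariant subspace `M` contains a nonzero closed
invariant subspace `N` all of whose elements have vanishing zeroth coordinate. -/
theorem invariant_subspace_contains_shift_invariant (α β : ℂ) (hα : α ≠ 0) (hβ : β ≠ 0)
    (hnorm : ‖α‖ ^ 2 + ‖β‖ ^ 2 = 1)
    (T : H →L[ℂ] H)
    (hT0 : T (e 0) = (α * conj β) • e 0 + β • e 1)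
    (hTn : ∀ n : ℕ, 1 ≤ n → T (e n) = e (n + 1))
    (M : Submodule ℂ H) (hMcl : IsClosed (M : Set H)) (hMne : M ≠ ⊥)
    (hMinv : ∀ x ∈ M, T x ∈ M) :
    ∃ N : Submodule ℂ H, IsClosed (N : Set H) ∧ N ≠ ⊥ ∧ N ≤ M ∧
      (∀ x ∈ N, (inner ℂ x (e 0) : ℂ) = 0) ∧ (∀ x ∈ N, T x ∈ N) :=
  invariant_subspace_contains_shift_invariant_general α β hβ hnorm T hT0 hTn M hMcl hMne hMinv

end
end

section
/- Beurling-type theorem: if M is a nonzero closed subspace of H with T_{α,β} M ⊆ M, then the wandering subspace M ⊖ T_{α,β} M is one-dimensional. (Here T_{α,β} M = {T_{α,β}x : x ∈ M} is automatically closed, since T_{α,β} is bounded below.) -/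
/-!
With `l = α β̄`, the operator `R = (1 - l S*) diag(1, β⁻¹, β⁻¹, …)` is invertible (`‖l‖ < 1`)
and satisfies `R T = S R`, where `S` is the unilateral shift. The dimension of `M ⊖ T M` is the
codimension of `T M` in `M`, hence a similarity invariant, so it equals that of `N ⊖ S N` for the
closed `S`-invariant subspace `N = R M`. For the shift this dimension is `1`: it is positive since
`S N ≠ N`, and if `v₁, …, v_d` are orthonormal in `N ⊖ S N` then all `Sⁿ vᵢ` are orthonormal, so
Bessel's inequality at `e k` gives `∑ᵢ ∑_{j ≤ k} |vᵢ j|² ≤ 1`, whence `d ≤ 1` as `k → ∞`.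
-/

open scoped ComplexConjugate

noncomputable section

open Finset Filter Topology
open scoped InnerProductSpace

universe u

section

variable {𝕜 : Type*} {E F : Type u} [RCLike 𝕜] [NormedAddCommGroup E] [InnerProductSpace 𝕜 E]
  [NormedAddCommGroup F] [InnerProductSpace 𝕜 F]

def IsWandering (V : E →ₗ[𝕜] E) (L : Submodule 𝕜 E) : Prop :=
  ∀ u ∈ L, ∀ v ∈ L, ∀ n : ℕ, ⟪V^[n + 1] u, v⟫_𝕜 = 0

theorem isWandering_inf_orthogonal_map {V : E →ₗ[𝕜] E} {N : Submodule 𝕜 E}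
    (hN : N.map V ≤ N) : IsWandering V (N ⊓ (N.map V)ᗮ) := by
  rintro u ⟨hu, -⟩ v ⟨-, hv⟩ n
  have hiter : ∀ k, V^[k] u ∈ N := by
    intro k
    induction k with
    | zero => exact hu
    | succ k ih => rw [Function.iterate_succ_apply']; exact hN (Submodule.mem_map_of_mem ih)
  rw [Function.iterate_succ_apply']
  exact Submodule.inner_right_of_mem_orthogonal (Submodule.mem_map_of_mem (hiter n)) hv

theorem IsWandering.orthonormal_iterate {S : E →ₗᵢ[𝕜] E} {L : Submodule 𝕜 E}
    (hL : IsWandering S.toLinearMap L) {ι : Type*} {v : ι → E} (hv : Orthonormal 𝕜 v)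
    (hvL : ∀ i, v i ∈ L) : Orthonormal 𝕜 fun p : ℕ × ι => S^[p.1] (v p.2) := by
  classical
  have key : ∀ m k i j, ⟪S^[m + k] (v i), S^[m] (v j)⟫_𝕜 = if (k, i) = (0, j) then 1 else 0 := by
    intro m k i j
    rw [Function.iterate_add_apply, ← LinearIsometry.coe_pow, LinearIsometry.inner_map_map]
    cases k with
    | zero => simpa using orthonormal_iff_ite.1 hv i j
    | succ k => simpa using hL _ (hvL i) _ (hvL j) k
  rw [orthonormal_iff_ite]
  rintro ⟨n, i⟩ ⟨m, j⟩
  rcases le_total m n with h | h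
  · obtain ⟨k, rfl⟩ := Nat.exists_eq_add_of_le h
    simpa using key m k i j
  · obtain ⟨k, rfl⟩ := Nat.exists_eq_add_of_le h
    rw [← inner_conj_symm, key n k j i]
    aesop

theorem inf_orthogonal_ne_bot {K M : Submodule 𝕜 E} [K.HasOrthogonalProjection] (hKM : K ≤ M)
    (hne : K ≠ M) : M ⊓ Kᗮ ≠ ⊥ := by
  intro h
  apply hne
  simpa [inf_comm, h] using Submodule.sup_orthogonal_inf_of_hasOrthogonalProjection hKM

theorem rank_inf_orthogonal_le (R : E →ₗ[𝕜] F) {M K : Submodule 𝕜 E} {M' K' : Submodule 𝕜 F}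
    [K'.HasOrthogonalProjection] (hK' : K' ≤ M') (hM : M.map R ≤ M')
    (hK : M ⊓ K'.comap R ≤ K) : Module.rank 𝕜 ↥(M ⊓ Kᗮ) ≤ Module.rank 𝕜 ↥(M' ⊓ K'ᗮ) := by
  let P : F →ₗ[𝕜] F := LinearMap.id - K'.starProjection.toLinearMap
  have hP : ∀ y ∈ M', P y ∈ M' ⊓ K'ᗮ := fun y hy =>
    ⟨M'.sub_mem hy (hK' (K'.starProjection_apply_mem y)), K'.sub_starProjection_mem_orthogonal y⟩
  let φ : ↥(M ⊓ Kᗮ) →ₗ[𝕜] ↥(M' ⊓ K'ᗮ) :=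
    (P ∘ₗ R ∘ₗ (M ⊓ Kᗮ).subtype).codRestrict _ fun x => hP _ (hM ⟨x, x.2.1, rfl⟩)
  refine LinearMap.rank_le_of_injective φ ((injective_iff_map_eq_zero φ).2 fun x hx => ?_)
  have hxK' : R x ∈ K' := by
    have : R x - K'.starProjection (R x) = 0 := congrArg Subtype.val hx
    rw [sub_eq_zero] at this
    exact this ▸ K'.starProjection_apply_mem (R x)
  have hxK : (x : E) ∈ K := hK ⟨x.2.1, hxK'⟩
  exact Subtype.ext ((Submodule.mem_bot 𝕜).1 (K.inf_orthogonal_eq_bot ▸ ⟨hxK, x.2.2⟩))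

theorem rank_inf_orthogonal_map_eq [CompleteSpace E] [CompleteSpace F] (R : E ≃L[𝕜] F)
    {K M : Submodule 𝕜 E} (hKM : K ≤ M) (hK : IsClosed (K.map (R : E →ₗ[𝕜] F) : Set F)) :
    Module.rank 𝕜 ↥(M.map (R : E →ₗ[𝕜] F) ⊓ (K.map (R : E →ₗ[𝕜] F))ᗮ) =
      Module.rank 𝕜 ↥(M ⊓ Kᗮ) := by
  have : CompleteSpace (K.map (R : E →ₗ[𝕜] F)) := hK.completeSpace_coe
  have hKc : IsClosed (K : Set E) := by
    simpa [Submodule.map_coe, R.image_eq_preimage_symm] using hK.preimage R.continuous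
  have : CompleteSpace K := hKc.completeSpace_coe
  refine le_antisymm (rank_inf_orthogonal_le (R.symm : F →ₗ[𝕜] E) hKM ?_ ?_)
    (rank_inf_orthogonal_le (R : E →ₗ[𝕜] F) (Submodule.map_mono hKM) le_rfl ?_)
  · rintro _ ⟨_, ⟨x, hx, rfl⟩, rfl⟩
    simpa using hx
  · rintro y ⟨hy, hyK⟩
    exact ⟨R.symm y, hyK, by simp⟩
  · rintro x ⟨-, hx⟩
    rwa [Submodule.comap_map_eq_of_injective R.injective] at hx

end

theorem inner_e_left (n : ℕ) (x : H) : ⟪e n, x⟫_ℂ = x n := by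
  simp [e, lp.inner_single_left]

theorem inner_e_right (x : H) (n : ℕ) : ⟪x, e n⟫_ℂ = conj (x n) := by
  rw [← inner_conj_symm, inner_e_left]

theorem orthonormal_e : Orthonormal ℂ e := by
  classical
  refine orthonormal_iff_ite.2 fun i j => ?_
  rw [inner_e_left, e, lp.single_apply, Pi.single_apply]

theorem ext_inner_e {x y : H} (h : ∀ n, ⟪e n, x⟫_ℂ = ⟪e n, y⟫_ℂ) : x = y :=
  lp.ext <| funext fun n => by simpa [inner_e_left] using h n

theorem ContinuousLinearMap.ext_e {A B : H →L[ℂ] H} (h : ∀ n, A (e n) = B (e n)) : A = B :=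
  lp.ext_continuousLinearMap ENNReal.ofNat_ne_top fun n => ContinuousLinearMap.ext_ring (h n)

theorem lp.hasSum_norm_sq {ι : Type*} {G : ι → Type*} [∀ i, NormedAddCommGroup (G i)]
    (x : lp G 2) : HasSum (fun i => ‖x i‖ ^ 2) (‖x‖ ^ 2) := by
  simpa using lp.hasSum_norm (p := 2) (by norm_num) x

def shift : H →ₗᵢ[ℂ] H :=
  (orthonormal_e.comp _ Nat.succ_injective).orthogonalFamily.linearIsometry

theorem shift_e (n : ℕ) : shift (e n) = e (n + 1) := by
  simp [shift, e]

theorem shift_iterate_e (k n : ℕ) : shift^[k] (e n) = e (n + k) := by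
  induction k with
  | zero => rfl
  | succ k ih => rw [Function.iterate_succ_apply', ih, shift_e, add_assoc]

abbrev backwardShift : H →L[ℂ] H := ContinuousLinearMap.adjoint shift.toContinuousLinearMap

theorem inner_e_backwardShift (m n : ℕ) :
    ⟪e m, backwardShift (e n)⟫_ℂ = ⟪e (m + 1), e n⟫_ℂ := by
  rw [ContinuousLinearMap.adjoint_inner_right]
  simp [shift_e]

theorem backwardShift_e_zero : backwardShift (e 0) = 0 :=
  ext_inner_e fun m => by
    rw [inner_e_backwardShift, orthonormal_e.inner_eq_zero (by omega), inner_zero_right]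

theorem backwardShift_e_succ (n : ℕ) : backwardShift (e (n + 1)) = e n :=
  ext_inner_e fun m => by
    rw [inner_e_backwardShift, ← shift_e, ← shift_e, LinearIsometry.inner_map_map]

theorem norm_backwardShift_le : ‖backwardShift‖ ≤ 1 := by
  rw [LinearIsometryEquiv.norm_map]
  exact shift.norm_toContinuousLinearMap_le

theorem shift_apply_zero (x : H) : shift x 0 = 0 := by
  rw [← inner_e_left, ← shift.coe_toContinuousLinearMap,
    ← ContinuousLinearMap.adjoint_inner_left, backwardShift_e_zero, inner_zero_left]

theorem shift_apply_succ (x : H) (n : ℕ) : shift x (n + 1) = x n := by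
  rw [← inner_e_left, ← inner_e_left, ← shift_e, LinearIsometry.inner_map_map]

theorem eq_bot_of_map_shift_eq {N : Submodule ℂ H} (h : N.map shift.toLinearMap = N) :
    N = ⊥ := by
  have hcoord : ∀ k, ∀ x ∈ N, ∀ j < k, x j = 0 := by
    intro k
    induction k with
    | zero => intro x _ j hj; omega
    | succ k ih =>
      intro x hx j hj
      rw [← h] at hx
      obtain ⟨y, hy, rfl⟩ := hx
      cases j with
      | zero => exact shift_apply_zero y
      | succ j => exact (shift_apply_succ y j).trans (ih y hy j (by omega))
  exact (Submodule.eq_bot_iff N).2 fun x hx =>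
    lp.ext <| funext fun j => hcoord (j + 1) x hx j j.lt_succ_self

theorem card_le_one_of_isWandering_shift {L : Submodule ℂ H}
    (hL : IsWandering shift.toLinearMap L) {ι : Type*} [Fintype ι] {v : ι → H}
    (hv : Orthonormal ℂ v) (hvL : ∀ i, v i ∈ L) : Fintype.card ι ≤ 1 := by
  have hpartial : ∀ k, ∑ i, ∑ j ∈ range (k + 1), ‖v i j‖ ^ 2 ≤ 1 := by
    intro k
    have hbessel := (hL.orthonormal_iterate hv hvL).sum_inner_products_le (e k)
      (s := range (k + 1) ×ˢ univ)
    rw [orthonormal_e.1 k, one_pow, sum_product_right] at hbessel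
    refine le_of_eq_of_le (sum_congr rfl fun i _ => ?_) hbessel
    rw [← sum_range_reflect]
    refine sum_congr rfl fun n hn => ?_
    have hn : n ≤ k := Nat.lt_succ_iff.1 (mem_range.1 hn)
    rw [show e k = shift^[n] (e (k - n)) by rw [shift_iterate_e, Nat.sub_add_cancel hn],
      ← LinearIsometry.coe_pow, LinearIsometry.inner_map_map, inner_e_right, RCLike.norm_conj,
      Nat.add_sub_cancel]
  have hlim : Tendsto (fun k => ∑ i, ∑ j ∈ range (k + 1), ‖v i j‖ ^ 2) atTop
      (𝓝 (Fintype.card ι : ℝ)) := by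
    have := tendsto_finsetSum univ fun i _ => (lp.hasSum_norm_sq (v i)).tendsto_sum_nat
    simp only [hv.1, one_pow, sum_const, card_univ, nsmul_eq_mul, mul_one] at this
    exact (tendsto_add_atTop_iff_nat 1).2 this
  exact_mod_cast le_of_tendsto' hlim hpartial

theorem rank_le_one_of_isWandering_shift {L : Submodule ℂ H}
    (hL : IsWandering shift.toLinearMap L) : Module.rank ℂ L ≤ 1 := by
  refine rank_le fun s hs => ?_
  let W := Submodule.span ℂ (s : Set L)
  let b := stdOrthonormalBasis ℂ W
  have hcard := card_le_one_of_isWandering_shift hL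
    (b.orthonormal.comp_linearIsometry (L.subtypeₗᵢ.comp W.subtypeₗᵢ)) fun i => (b i : L).2
  rwa [Fintype.card_fin, finrank_span_finset_eq_card hs] at hcard

theorem isClosed_map_shift {N : Submodule ℂ H} (hN : IsClosed (N : Set H)) :
    IsClosed (N.map shift.toLinearMap : Set H) :=
  ((isComplete_image_iff shift.isometry.isUniformInducing).2 hN.isComplete).isClosed

theorem rank_inf_orthogonal_map_shift {N : Submodule ℂ H} (hN : IsClosed (N : Set H))
    (hSN : N.map shift.toLinearMap ≤ N) (hN0 : N ≠ ⊥) :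
    Module.rank ℂ ↥(N ⊓ (N.map shift.toLinearMap)ᗮ) = 1 := by
  have : CompleteSpace (N.map shift.toLinearMap) := (isClosed_map_shift hN).completeSpace_coe
  refine le_antisymm (rank_le_one_of_isWandering_shift (isWandering_inf_orthogonal_map hSN)) ?_
  rw [Cardinal.one_le_iff_pos, rank_pos_iff_nontrivial, Submodule.nontrivial_iff_ne_bot]
  exact inf_orthogonal_ne_bot hSN fun h => hN0 (eq_bot_of_map_shift_eq h)

/-- `diag(1, c, c, …)`: `S S*` is the projection onto `(e 0)ᗮ`. -/
def diagOp (c : ℂ) : H →L[ℂ] H :=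
  1 - (1 - c) • (shift.toContinuousLinearMap ∘L backwardShift)

theorem diagOp_e_zero (c : ℂ) : diagOp c (e 0) = e 0 := by
  simp [diagOp, backwardShift_e_zero]

theorem diagOp_e_succ (c : ℂ) (n : ℕ) : diagOp c (e (n + 1)) = c • e (n + 1) := by
  simp only [diagOp, sub_apply, smul_apply, ContinuousLinearMap.comp_apply, backwardShift_e_succ,
    LinearIsometry.coe_toContinuousLinearMap, shift_e, one_apply_eq_self]
  module

theorem diagOp_mul (c d : ℂ) : diagOp c * diagOp d = diagOp (c * d) :=
  ContinuousLinearMap.ext_e fun n => by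
    cases n <;> simp [diagOp_e_zero, diagOp_e_succ, smul_smul, mul_comm]

theorem diagOp_one : diagOp 1 = 1 := by
  simp [diagOp]

def diagUnit {c : ℂ} (hc : c ≠ 0) : (H →L[ℂ] H)ˣ where
  val := diagOp c
  inv := diagOp c⁻¹
  val_inv := by rw [diagOp_mul, mul_inv_cancel₀ hc, diagOp_one]
  inv_val := by rw [diagOp_mul, inv_mul_cancel₀ hc, diagOp_one]

theorem exists_conj_shift {l β : ℂ} (hl : ‖l‖ < 1) (hβ : β ≠ 0) {T : H →L[ℂ] H}
    (hT0 : T (e 0) = l • e 0 + β • e 1) (hTn : ∀ n : ℕ, 1 ≤ n → T (e n) = e (n + 1)) :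
    ∃ R : H ≃L[ℂ] H, ∀ x, R (T x) = shift (R x) := by
  have hlS : ‖l • backwardShift‖ < 1 :=
    (norm_smul_le l backwardShift).trans_lt
      (by nlinarith [norm_backwardShift_le, norm_nonneg l, norm_nonneg backwardShift])
  let U : (H →L[ℂ] H)ˣ := Units.oneSub _ hlS * diagUnit (inv_ne_zero hβ)
  have hU0 : (U : H →L[ℂ] H) (e 0) = e 0 := by
    simp [U, diagUnit, diagOp_e_zero, backwardShift_e_zero]
  have hU : ∀ n, (U : H →L[ℂ] H) (e (n + 1)) = β⁻¹ • (e (n + 1) - l • e n) := by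
    intro n
    simp [U, diagUnit, diagOp_e_succ, backwardShift_e_succ, smul_sub]
  have hUT : (U : H →L[ℂ] H) ∘L T = shift.toContinuousLinearMap ∘L U := by
    refine ContinuousLinearMap.ext_e fun n => ?_
    rcases n with _ | n
    · simp [hT0, hU0, hU, shift_e, hβ]
    · simp [hTn, hU, shift_e]
  exact ⟨.ofUnit U, fun x => DFunLike.congr_fun hUT x⟩

theorem wandering_subspace_dim_one_general (α β : ℂ) (hβ : β ≠ 0)
    (hnorm : ‖α‖ ^ 2 + ‖β‖ ^ 2 = 1)
    (T : H →L[ℂ] H)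
    (hT0 : T (e 0) = (α * conj β) • e 0 + β • e 1)
    (hTn : ∀ n : ℕ, 1 ≤ n → T (e n) = e (n + 1))
    (M : Submodule ℂ H) (hMcl : IsClosed (M : Set H)) (hMne : M ≠ ⊥)
    (hMinv : Submodule.map (T : H →ₗ[ℂ] H) M ≤ M) :
    Module.finrank ℂ ↥(M ⊓ (Submodule.map (T : H →ₗ[ℂ] H) M)ᗮ) = 1 := by
  have hl : ‖α * conj β‖ < 1 := by
    rw [norm_mul, Complex.norm_conj]
    nlinarith [sq_nonneg (‖α‖ - ‖β‖)]
  obtain ⟨R, hR⟩ := exists_conj_shift hl hβ hT0 hTn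
  set N := M.map (R : H →ₗ[ℂ] H)
  have hRT : (M.map (T : H →ₗ[ℂ] H)).map (R : H →ₗ[ℂ] H) = N.map shift.toLinearMap := by
    rw [← Submodule.map_comp, ← Submodule.map_comp]
    congr 1
    exact LinearMap.ext hR
  have hN : IsClosed (N : Set H) := by
    simpa [N, Submodule.map_coe] using R.toHomeomorph.isClosedMap _ hMcl
  have hN0 : N ≠ ⊥ := fun h => hMne ((Submodule.map_eq_bot_iff (e := R.toLinearEquiv)).1 h)
  apply Module.finrank_eq_of_rank_eq
  rw [← rank_inf_orthogonal_map_eq R hMinv (hRT ▸ isClosed_map_shift hN), hRT]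
  exact rank_inf_orthogonal_map_shift hN (hRT ▸ Submodule.map_mono hMinv) hN0

/-- Beurling-type theorem: the wandering subspace `M ⊖ T M` of a nonzero closed
`T_{α,β}`-invariant subspace `M` is one-dimensional. -/
theorem wandering_subspace_dim_one (α β : ℂ) (hα : α ≠ 0) (hβ : β ≠ 0)
    (hnorm : ‖α‖ ^ 2 + ‖β‖ ^ 2 = 1)
    (T : H →L[ℂ] H)
    (hT0 : T (e 0) = (α * conj β) • e 0 + β • e 1)
    (hTn : ∀ n : ℕ, 1 ≤ n → T (e n) = e (n + 1))
    (M : Submodule ℂ H) (hMcl : IsClosed (M : Set H)) (hMne : M ≠ ⊥)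
    (hMinv : Submodule.map (T : H →ₗ[ℂ] H) M ≤ M) :
    Module.finrank ℂ ↥(M ⊓ (Submodule.map (T : H →ₗ[ℂ] H) M)ᗮ) = 1 :=
  wandering_subspace_dim_one_general α β hβ hnorm T hT0 hTn M hMcl hMne hMinv

end
end
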